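/- Let Ω ∈ H_n and Z ∈ ℂ^{(m,n)}. Then: (i) Ω is invertible and det(Ω/i) ≠ 0; (ii) the function x ↦ exp(πi σ(x Ω ᵗx + 2 x ᵗZ)) is integrable on ℝ^{(m,n)}; (iii) the Gaussian integral I = ∫_{ℝ^{(m,n)}} exp(πi σ(x Ω ᵗx + 2 x ᵗZ)) dx satisfies I² · det(Ω/i)^m = exp(−2πi σ(Z Ω^{-1} ᵗZ)). (Equivalently, I = det(Ω/i)^{−m/2} exp(−πi σ(Z Ω^{-1} ᵗZ)) for the branch of det(Ω/i)^{1/2} that is positive when Ω = iY with Y positive definite.) -/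

import Mathlib

/-!
The real part `X` and the positive definite imaginary part `Y` of `Ω` are diagonalised
simultaneously by a real congruence: `P Y Pᵀ = 1` and `P X Pᵀ = diagonal d`, so that
`P Ω Pᵀ = diagonal (d + i)`. The substitution `v = Pᵀ u` turns the integral over one row into a
product of one-dimensional Gaussians `∫ exp (πi (c t² + 2 w t)) dt` with `Im c > 0`, each of
which squares to `(c / i)⁻¹ exp (-2πi w² / c)`; the Jacobian `|det P|`, once squared, is absorbed by
`det (Ω / i) = (det P)⁻² ∏ (c_j / i)`. The trace in the exponent is a sum over the `m` rows of
`x`, so the integral over `ℝ^{(m,n)}` is the product of `m` row integrals.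
-/

open Matrix MeasureTheory Complex Real

section ChangeOfVariables

variable {ι F : Type*} [Fintype ι] [DecidableEq ι] [NormedAddCommGroup F]
  {A : Matrix ι ι ℝ}

lemma measurableEmbedding_mulVec (hA : A.det ≠ 0) :
    MeasurableEmbedding (A *ᵥ · : (ι → ℝ) → ι → ℝ) :=
  (toLinearEquiv' A (A.invertibleOfIsUnitDet hA.isUnit)).toContinuousLinearEquiv.toHomeomorph
    |>.measurableEmbedding

lemma map_mulVec_volume (hA : A.det ≠ 0) :
    Measure.map (A *ᵥ ·) volume = ENNReal.ofReal |A.det⁻¹| • (volume : Measure (ι → ℝ)) :=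
  Real.map_matrix_volume_pi_eq_smul_volume_pi hA

lemma integral_comp_mulVec [NormedSpace ℝ F] (hA : A.det ≠ 0) (f : (ι → ℝ) → F) :
    ∫ v, f (A *ᵥ v) = |A.det|⁻¹ • ∫ v, f v := by
  rw [← (measurableEmbedding_mulVec hA).integral_map,
    map_mulVec_volume hA, integral_smul_measure, abs_inv,
    ENNReal.toReal_ofReal (by positivity)]

lemma integrable_comp_mulVec_iff (hA : A.det ≠ 0) {f : (ι → ℝ) → F} :
    Integrable (fun v ↦ f (A *ᵥ v)) ↔ Integrable f := by
  rw [← Function.comp_def, ← (measurableEmbedding_mulVec hA).integrable_map_iff,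
    map_mulVec_volume hA,
    integrable_smul_measure (by simpa using hA) ENNReal.ofReal_ne_top]

end ChangeOfVariables

open scoped ComplexOrder MatrixOrder in
lemma Matrix.PosDef.exists_mul_mul_conjTranspose_eq_one_and_diagonal {𝕜 ι : Type*} [RCLike 𝕜]
    [Fintype ι] [DecidableEq ι] {X Y : Matrix ι ι 𝕜} (hX : X.IsHermitian) (hY : Y.PosDef) :
    ∃ P : Matrix ι ι 𝕜, P * Y * Pᴴ = 1 ∧
      ∃ d : ι → ℝ, P * X * Pᴴ = diagonal (RCLike.ofReal ∘ d) := by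
  obtain ⟨B, rfl⟩ := CStarAlgebra.nonneg_iff_eq_star_mul_self.mp hY.posSemidef.nonneg
  have hB : IsUnit B.det := by
    have := (isUnit_iff_isUnit_det _).mp hY.isUnit
    rw [det_mul] at this
    exact isUnit_of_mul_isUnit_right this
  have hM : (star B⁻¹ * X * B⁻¹).IsHermitian := isHermitian_conjTranspose_mul_mul B⁻¹ hX
  set U : Matrix ι ι 𝕜 := (hM.eigenvectorUnitary : Matrix ι ι 𝕜)
  refine ⟨star U * star B⁻¹, ?_, hM.eigenvalues, ?_⟩
  · have hU : star U * U = 1 := Unitary.coe_star_mul_self hM.eigenvectorUnitary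
    have hBB : star B⁻¹ * star B = 1 := by
      rw [star_eq_conjTranspose, star_eq_conjTranspose, ← conjTranspose_mul, mul_nonsing_inv B hB,
        conjTranspose_one]
    calc star U * star B⁻¹ * (star B * B) * (star U * star B⁻¹)ᴴ
        = star U * (star B⁻¹ * star B) * (B * B⁻¹) * U := by
          rw [← star_eq_conjTranspose, star_mul, star_star, star_star]; simp only [mul_assoc]
      _ = 1 := by rw [hBB, mul_nonsing_inv B hB, mul_one, mul_one, hU]
  · rw [← hM.conjStarAlgAut_star_eigenvectorUnitary, Unitary.conjStarAlgAut_star_apply,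
      ← star_eq_conjTranspose, star_mul, star_star, star_star]
    simp only [U, mul_assoc]

lemma map_ofReal_mul_mul_transpose {ι : Type*} [Fintype ι] (P X : Matrix ι ι ℝ) :
    P.map ofReal * X.map ofReal * (P.map ofReal)ᵀ = (P * X * Pᵀ).map ofReal := by
  ext i j
  simp [mul_apply]

lemma exists_real_congr_eq_diagonal {ι : Type*} [Fintype ι] [DecidableEq ι]
    {Ω : Matrix ι ι ℂ} (hΩ : Ω.IsSymm) (hΩim : (Ω.map im).PosDef) :
    ∃ P : Matrix ι ι ℝ, P.det ≠ 0 ∧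
      ∃ d : ι → ℝ, P.map ofReal * Ω * (P.map ofReal)ᵀ = diagonal fun j ↦ d j + I := by
  have hre : (Ω.map re).IsHermitian := by
    rw [IsHermitian, conjTranspose_eq_transpose_of_trivial, ← transpose_map, hΩ.eq]
  obtain ⟨P, hPY, d, hPX⟩ := hΩim.exists_mul_mul_conjTranspose_eq_one_and_diagonal hre
  rw [conjTranspose_eq_transpose_of_trivial] at hPY hPX
  have hP : P.det ≠ 0 := by
    have := congrArg det hPY
    rw [det_mul, det_mul, det_one] at this
    exact left_ne_zero_of_mul (left_ne_zero_of_mul_eq_one this)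
  have hΩ_eq : Ω = (Ω.map re).map ofReal + I • (Ω.map im).map ofReal := by
    ext i j
    simp [mul_comm I, re_add_im]
  refine ⟨P, hP, d, ?_⟩
  rw [hΩ_eq, mul_add, add_mul, Matrix.mul_smul, Matrix.smul_mul, map_ofReal_mul_mul_transpose,
    map_ofReal_mul_mul_transpose, hPX, hPY]
  ext i j
  rcases eq_or_ne i j with rfl | h
  · simp
  · simp [h]

lemma dotProduct_mul_mul_transpose_inv_mulVec {ι R : Type*} [Fintype ι] [DecidableEq ι]
    [CommRing R] {A : Matrix ι ι R} (hA : IsUnit A.det) (M : Matrix ι ι R) (z : ι → R) :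
    (A *ᵥ z) ⬝ᵥ (A * M * Aᵀ)⁻¹ *ᵥ (A *ᵥ z) = z ⬝ᵥ M⁻¹ *ᵥ z := by
  have hinv : Aᵀ * (A * M * Aᵀ)⁻¹ * A = M⁻¹ := by
    rw [Matrix.mul_inv_rev, Matrix.mul_inv_rev, ← mul_assoc,
      mul_nonsing_inv _ (by rwa [det_transpose]), one_mul, mul_assoc, nonsing_inv_mul _ hA,
      mul_one]
  rw [← hinv, ← mulVec_mulVec, ← mulVec_mulVec, dotProduct_mulVec z Aᵀ, vecMul_transpose]

lemma integrable_cexp_pi_I_quadratic {c : ℂ} (hc : 0 < c.im) (w : ℂ) :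
    Integrable fun t : ℝ ↦ cexp (π * I * (c * t ^ 2 + 2 * w * t)) := by
  have hb : (π * I * c).re < 0 := by simpa using mul_pos pi_pos hc
  convert integrable_cexp_quadratic' hb (2 * π * I * w) 0 using 3 with t
  ring

lemma integral_cexp_pi_I_quadratic_sq_mul {c : ℂ} (hc : 0 < c.im) (w : ℂ) :
    (∫ t : ℝ, cexp (π * I * (c * t ^ 2 + 2 * w * t))) ^ 2 * (I⁻¹ * c) =
      cexp (-(2 * π * I) * (w ^ 2 / c)) := by
  have hb : (π * I * c).re < 0 := by simpa using mul_pos pi_pos hc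
  have hc0 : c ≠ 0 := by rintro rfl; simp at hc
  simp_rw [show ∀ t : ℝ, π * I * (c * t ^ 2 + 2 * w * t) =
      π * I * c * t ^ 2 + 2 * π * I * w * t + 0 from fun t ↦ by ring,
    integral_cexp_quadratic hb]
  have hsqrt : ((π / -(π * I * c)) ^ (1 / 2 : ℂ)) ^ 2 = π / -(π * I * c) := by
    simp
  have hprefactor : π / -(π * I * c) * (I⁻¹ * c) = 1 := by
    field_simp
    simp
  have hexp : cexp (0 - (2 * π * I * w) ^ 2 / (4 * (π * I * c))) ^ 2 =
      cexp (-(2 * π * I) * (w ^ 2 / c)) := by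
    rw [← Complex.exp_nat_mul]
    congr 1
    field_simp
    ring_nf
  rw [mul_pow, hsqrt, hexp]
  linear_combination cexp (-(2 * π * I) * (w ^ 2 / c)) * hprefactor

section SiegelGaussian

variable {ι : Type*} [Fintype ι]

noncomputable def siegelGaussian (Ω : Matrix ι ι ℂ) (z : ι → ℂ) (v : ι → ℝ) : ℂ :=
  cexp (π * I * ((ofReal ∘ v) ⬝ᵥ Ω *ᵥ (ofReal ∘ v) + 2 * ((ofReal ∘ v) ⬝ᵥ z)))

lemma siegelGaussian_transpose_mulVec (Ω : Matrix ι ι ℂ) (z : ι → ℂ) (P : Matrix ι ι ℝ)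
    (v : ι → ℝ) :
    siegelGaussian Ω z (Pᵀ *ᵥ v) =
      siegelGaussian (P.map ofReal * Ω * (P.map ofReal)ᵀ) (P.map ofReal *ᵥ z) v := by
  have hcast : ofReal ∘ (Pᵀ *ᵥ v) = (P.map ofReal)ᵀ *ᵥ (ofReal ∘ v) := by
    ext i
    simp [mulVec, dotProduct]
  rw [siegelGaussian, siegelGaussian, hcast, ← mulVec_mulVec, ← mulVec_mulVec,
    dotProduct_mulVec (ofReal ∘ v) (P.map ofReal), dotProduct_mulVec (ofReal ∘ v) (P.map ofReal),
    ← mulVec_transpose]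

lemma siegelGaussian_diagonal [DecidableEq ι] (c w : ι → ℂ) :
    siegelGaussian (diagonal c) w =
      fun v ↦ ∏ j, cexp (π * I * (c j * v j ^ 2 + 2 * w j * v j)) := by
  ext v
  simp only [siegelGaussian, ← Complex.exp_sum, ← Finset.mul_sum]
  congr 2
  simp only [mulVec_diagonal, dotProduct, Function.comp_apply, Finset.mul_sum,
    ← Finset.sum_add_distrib]
  exact Finset.sum_congr rfl fun j _ ↦ by ring

end SiegelGaussian

section Diagonal

variable {ι : Type*} [Fintype ι] [DecidableEq ι] {c : ι → ℂ}

lemma integrable_siegelGaussian_diagonal (hc : ∀ j, 0 < (c j).im) (w : ι → ℂ) :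
    Integrable (siegelGaussian (diagonal c) w) := by
  rw [siegelGaussian_diagonal]
  exact Integrable.fintype_prod (f := fun j (t : ℝ) ↦ cexp (π * I * (c j * t ^ 2 + 2 * w j * t)))
    fun j ↦ integrable_cexp_pi_I_quadratic (hc j) (w j)

lemma integral_siegelGaussian_diagonal_sq_mul_det (hc : ∀ j, 0 < (c j).im) (w : ι → ℂ) :
    (∫ v, siegelGaussian (diagonal c) w v) ^ 2 * (I⁻¹ • diagonal c).det =
      cexp (-(2 * π * I) * (w ⬝ᵥ (diagonal c)⁻¹ *ᵥ w)) := by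
  have hc0 : ∀ j, c j ≠ 0 := fun j h ↦ by simpa [h] using hc j
  have hinv : (diagonal c)⁻¹ = diagonal fun j ↦ (c j)⁻¹ :=
    inv_eq_left_inv (by rw [diagonal_mul_diagonal]; simp [hc0])
  rw [siegelGaussian_diagonal, integral_fintype_prod_volume_eq_prod
      (f := fun j (t : ℝ) ↦ cexp (π * I * (c j * t ^ 2 + 2 * w j * t))),
    ← diagonal_smul, det_diagonal, ← Finset.prod_pow, ← Finset.prod_mul_distrib, hinv]
  simp only [dotProduct, mulVec_diagonal, Finset.mul_sum, Complex.exp_sum]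
  refine Finset.prod_congr rfl fun j _ ↦ ?_
  rw [Pi.smul_apply, smul_eq_mul, integral_cexp_pi_I_quadratic_sq_mul (hc j)]
  congr 2
  ring

end Diagonal

section SiegelHalfSpace

variable {ι : Type*} [Fintype ι] [DecidableEq ι] {Ω : Matrix ι ι ℂ}

lemma det_ne_zero_of_posDef_im (hΩ : Ω.IsSymm) (hΩim : (Ω.map im).PosDef) : Ω.det ≠ 0 := by
  obtain ⟨P, -, d, hD⟩ := exists_real_congr_eq_diagonal hΩ hΩim
  intro h
  have := congrArg det hD
  rw [det_mul, det_mul, h, mul_zero, zero_mul, det_diagonal, eq_comm,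
    Finset.prod_eq_zero_iff] at this
  obtain ⟨j, -, hj⟩ := this
  simpa using congrArg im hj

lemma integrable_siegelGaussian (hΩ : Ω.IsSymm) (hΩim : (Ω.map im).PosDef) (z : ι → ℂ) :
    Integrable (siegelGaussian Ω z) := by
  obtain ⟨P, hP, d, hD⟩ := exists_real_congr_eq_diagonal hΩ hΩim
  rw [← integrable_comp_mulVec_iff (A := Pᵀ) (by rwa [det_transpose])]
  simp_rw [siegelGaussian_transpose_mulVec, hD]
  exact integrable_siegelGaussian_diagonal (fun j ↦ by simp) _

lemma integral_siegelGaussian_sq_mul_det (hΩ : Ω.IsSymm) (hΩim : (Ω.map im).PosDef)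
    (z : ι → ℂ) :
    (∫ v, siegelGaussian Ω z v) ^ 2 * (I⁻¹ • Ω).det =
      cexp (-(2 * π * I) * (z ⬝ᵥ Ω⁻¹ *ᵥ z)) := by
  obtain ⟨P, hP, d, hD⟩ := exists_real_congr_eq_diagonal hΩ hΩim
  have hPc : (P.map ofReal).det = P.det := (RingHom.map_det ofRealHom P).symm
  have hint : ∫ v, siegelGaussian Ω z v =
      |P.det| • ∫ v, siegelGaussian (diagonal fun j ↦ d j + I) (P.map ofReal *ᵥ z) v := by
    simp_rw [← hD, ← siegelGaussian_transpose_mulVec]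
    rw [integral_comp_mulVec (by rwa [det_transpose]), det_transpose, smul_smul,
      mul_inv_cancel₀ (abs_ne_zero.mpr hP), one_smul]
  have hdet : (I⁻¹ • diagonal fun j ↦ (d j : ℂ) + I).det = P.det ^ 2 * (I⁻¹ • Ω).det := by
    rw [← hD, det_smul, det_smul, det_mul, det_mul, det_transpose, hPc]
    ring
  rw [← dotProduct_mul_mul_transpose_inv_mulVec (A := P.map ofReal) (by simpa [hPc] using hP), hD,
    ← integral_siegelGaussian_diagonal_sq_mul_det (fun j ↦ by simp), hint, hdet, real_smul,
    mul_pow, ← ofReal_pow, sq_abs, ofReal_pow]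
  ring

end SiegelHalfSpace

lemma trace_mul_mul_transpose {κ ι R : Type*} [Fintype κ] [Fintype ι] [CommSemiring R]
    (B : Matrix κ ι R) (C : Matrix ι ι R) :
    (B * C * Bᵀ).trace = ∑ k, B k ⬝ᵥ C *ᵥ B k := by
  simp only [trace, diag, mul_apply, transpose_apply, dotProduct, mulVec, Finset.mul_sum,
    Finset.sum_mul]
  refine Finset.sum_congr rfl fun k _ ↦ Finset.sum_comm.trans ?_
  exact Finset.sum_congr rfl fun p _ ↦ Finset.sum_congr rfl fun q _ ↦ by ring

lemma trace_mul_transpose {κ ι R : Type*} [Fintype κ] [Fintype ι] [CommSemiring R]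
    (B Z : Matrix κ ι R) : (B * Zᵀ).trace = ∑ k, B k ⬝ᵥ Z k := rfl

lemma cexp_trace_eq_prod_siegelGaussian {κ ι : Type*} [Fintype κ] [Fintype ι]
    (Ω : Matrix ι ι ℂ) (Z : Matrix κ ι ℂ) (x : κ → ι → ℝ) :
    cexp (π * I * trace ((of x).map ofReal * Ω * ((of x).map ofReal)ᵀ +
        2 • ((of x).map ofReal * Zᵀ))) = ∏ k, siegelGaussian Ω (Z k) (x k) := by
  rw [trace_add, trace_smul, trace_mul_mul_transpose, trace_mul_transpose, nsmul_eq_mul,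
    Nat.cast_ofNat, Finset.mul_sum, ← Finset.sum_add_distrib, Finset.mul_sum, Complex.exp_sum]
  rfl

theorem stmt15 {m n : ℕ} (Ω : Matrix (Fin n) (Fin n) ℂ) (hΩsymm : Ω.IsSymm)
    (hΩim : (Matrix.of fun i j => (Ω i j).im).PosDef)
    (Z : Matrix (Fin m) (Fin n) ℂ) :
    IsUnit Ω ∧
    (Complex.I⁻¹ • Ω).det ≠ 0 ∧
    Integrable (fun x : Fin m → Fin n → ℝ =>
      Complex.exp ((Real.pi : ℂ) * Complex.I * Matrix.trace
        ((Matrix.of x).map Complex.ofReal * Ω * ((Matrix.of x).map Complex.ofReal)ᵀ +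
          2 • ((Matrix.of x).map Complex.ofReal * Zᵀ)))) ∧
    (∫ x : Fin m → Fin n → ℝ,
        Complex.exp ((Real.pi : ℂ) * Complex.I * Matrix.trace
          ((Matrix.of x).map Complex.ofReal * Ω * ((Matrix.of x).map Complex.ofReal)ᵀ +
            2 • ((Matrix.of x).map Complex.ofReal * Zᵀ)))) ^ 2 *
      ((Complex.I⁻¹ • Ω).det) ^ m =
      Complex.exp (-(2 * (Real.pi : ℂ) * Complex.I) * Matrix.trace (Z * Ω⁻¹ * Zᵀ)) := by
  have hdet : Ω.det ≠ 0 := det_ne_zero_of_posDef_im hΩsymm hΩim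
  simp only [cexp_trace_eq_prod_siegelGaussian]
  refine ⟨(isUnit_iff_isUnit_det Ω).mpr hdet.isUnit,
    det_smul Ω I⁻¹ ▸ mul_ne_zero (pow_ne_zero _ (inv_ne_zero I_ne_zero)) hdet, ?_, ?_⟩
  · exact Integrable.fintype_prod (f := fun k ↦ siegelGaussian Ω (Z k))
      fun k ↦ integrable_siegelGaussian hΩsymm hΩim (Z k)
  · rw [integral_fintype_prod_volume_eq_prod (f := fun k ↦ siegelGaussian Ω (Z k)),
      ← Finset.prod_pow, ← Fin.prod_const, ← Finset.prod_mul_distrib, trace_mul_mul_transpose,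
      Finset.mul_sum, Complex.exp_sum]
    exact Finset.prod_congr rfl fun k _ ↦ integral_siegelGaussian_sq_mul_det hΩsymm hΩim (Z k)
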